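/- Let T > 0, n ∈ ℕ, φ₀₀, φ₀₁, φ₁₀, φ₁₁, D_T ∈ Mₙ(ℝ), and F⁰ ∈ ℝⁿ. Let 𝒫 ∈ M₂ₙ(ℝ) be the block matrix with blocks [[φ₀₀, φ₀₁], [φ₁₀, φ₁₁]], Φ(t) := exp((T−t)𝒫), L := (D_T | −Iₙ), E₁ := (Iₙ ; 0ₙ), E₂ := (0ₙ ; Iₙ), M(t) := L Φ(t) E₂, and assume M(t) is invertible for every t ∈ [0,T]. Define D(t) := −M(t)⁻¹ L Φ(t) E₁ and D⁰(t) := −M(t)⁻¹ L (∫ₜᵀ Φ(s) ds) v with v := (F⁰ ; 0) ∈ ℝ²ⁿ. Suppose (𝔽, 𝔹) : [0,T] → ℝⁿ × ℝⁿ is continuously differentiable with 𝔽′ = φ₀₀ 𝔽 + φ₀₁ 𝔹 + F⁰, 𝔹′ = φ₁₀ 𝔽 + φ₁₁ 𝔹 on [0,T], and 𝔹(T) = D_T 𝔽(T). Then 𝔹(t) = D(t) 𝔽(t) + D⁰(t) for every t ∈ [0,T]. -/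

import Mathlib

/-!
Put `X = (𝔽, 𝔹)`, so that `X' = 𝒫 X + v`. Since `Φ' = -𝒫 Φ` and `𝒫` commutes with `Φ`, the
function `t ↦ Φ(t) X(t) + (∫ₜᵀ Φ) v` has derivative zero, hence equals its value `X(T)` at `T`
(variation of constants). The boundary condition says `L X(T) = 0`, so applying `L` and splitting
`X(t) = E₁ 𝔽(t) + E₂ 𝔹(t)` gives `L Φ(t) E₁ 𝔽(t) + M(t) 𝔹(t) + L (∫ₜᵀ Φ) v = 0`, which is solved
for `𝔹(t)` because `M(t)` is invertible.
-/

open Matrix Set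

attribute [local instance] Matrix.normedAddCommGroup Matrix.normedSpace

theorem hasDerivAt_exp_sub_smul {𝔸 : Type*} [NormedRing 𝔸] [NormedAlgebra ℝ 𝔸] [CompleteSpace 𝔸]
    (T : ℝ) (P : 𝔸) (t : ℝ) :
    HasDerivAt (fun t : ℝ => NormedSpace.exp ((T - t) • P))
      (-(P * NormedSpace.exp ((T - t) • P))) t := by
  simpa [Function.comp_def] using
    (hasDerivAt_exp_smul_const' P (T - t)).scomp t ((hasDerivAt_id t).const_sub T)

section

variable {𝕜 : Type*} [NontriviallyNormedField 𝕜]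

variable (𝕜) in
def Matrix.mulVecCLM [CompleteSpace 𝕜] (m n : Type*) [Fintype m] [Fintype n] :
    Matrix m n 𝕜 →L[𝕜] (n → 𝕜) →L[𝕜] m → 𝕜 :=
  LinearMap.toContinuousLinearMap
    (LinearMap.toContinuousLinearMap.toLinearMap ∘ₗ mulVecBilin 𝕜 𝕜)

theorem HasDerivWithinAt.mulVec [CompleteSpace 𝕜] {m n : Type*} [Fintype m] [Fintype n]
    {A : 𝕜 → Matrix m n 𝕜} {A' : Matrix m n 𝕜} {x : 𝕜 → n → 𝕜} {x' : n → 𝕜} {s : Set 𝕜} {t : 𝕜}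
    (hA : HasDerivWithinAt A A' s t) (hx : HasDerivWithinAt x x' s t) :
    HasDerivWithinAt (fun u => A u *ᵥ x u) (A t *ᵥ x' + A' *ᵥ x t) s t :=
  (mulVecCLM 𝕜 m n).hasDerivWithinAt_of_bilinear hA hx

theorem HasDerivWithinAt.sumElim {E ι κ : Type*} [NormedAddCommGroup E] [NormedSpace 𝕜 E]
    [Fintype ι] [Fintype κ] {f : 𝕜 → ι → E} {g : 𝕜 → κ → E} {f' : ι → E} {g' : κ → E}
    {s : Set 𝕜} {t : 𝕜} (hf : HasDerivWithinAt f f' s t) (hg : HasDerivWithinAt g g' s t) :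
    HasDerivWithinAt (fun u => Sum.elim (f u) (g u)) (Sum.elim f' g') s t :=
  hasDerivWithinAt_pi.2 fun
    | .inl i => hasDerivWithinAt_pi.1 hf i
    | .inr k => hasDerivWithinAt_pi.1 hg k

end

namespace Matrix

variable {m : Type*} [Fintype m] [DecidableEq m]

theorem hasDerivAt_exp_sub_smul (T : ℝ) (P : Matrix m m ℝ) (t : ℝ) :
    HasDerivAt (fun t : ℝ => NormedSpace.exp ((T - t) • P))
      (-(P * NormedSpace.exp ((T - t) • P))) t := by
  -- any norm will do for a derivative; the operator norm makes the matrices a normed algebra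
  let _ : NormedRing (Matrix m m ℝ) := Matrix.linftyOpNormedRing
  let _ : NormedAlgebra ℝ (Matrix m m ℝ) := Matrix.linftyOpNormedAlgebra
  exact @_root_.hasDerivAt_exp_sub_smul _ _ _ (FiniteDimensional.complete ℝ _) T P t

theorem hasDerivAt_integral_exp_sub_smul (T : ℝ) (P : Matrix m m ℝ) (t : ℝ) :
    HasDerivAt (fun u => ∫ s in u..T, NormedSpace.exp ((T - s) • P))
      (-NormedSpace.exp ((T - t) • P)) t := by
  have hcont : Continuous fun s : ℝ => NormedSpace.exp ((T - s) • P) :=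
    continuous_iff_continuousAt.2 fun s => (hasDerivAt_exp_sub_smul T P s).continuousAt
  -- instance search does not see through the `Matrix` type synonym here
  have : TopologicalSpace.PseudoMetrizableSpace (Matrix m m ℝ) :=
    inferInstanceAs (TopologicalSpace.PseudoMetrizableSpace (m → m → ℝ))
  exact intervalIntegral.integral_hasDerivAt_left (hcont.intervalIntegrable t T)
    (hcont.stronglyMeasurableAtFilter _ _) hcont.continuousAt

theorem exp_sub_smul_mulVec_add_integral_mulVec_eq {P : Matrix m m ℝ} {v : m → ℝ}
    {X : ℝ → m → ℝ} {a T t : ℝ}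
    (hX : ∀ s ∈ Icc a T, HasDerivWithinAt X (P *ᵥ X s + v) (Icc a T) s) (ht : t ∈ Icc a T) :
    NormedSpace.exp ((T - t) • P) *ᵥ X t
      + (∫ s in t..T, NormedSpace.exp ((T - s) • P)) *ᵥ v = X T := by
  set g : ℝ → m → ℝ := fun u => NormedSpace.exp ((T - u) • P) *ᵥ X u
    + (∫ s in u..T, NormedSpace.exp ((T - s) • P)) *ᵥ v
  have hg : ∀ s ∈ Icc a T, HasDerivWithinAt g 0 (Icc a T) s := by
    intro s hs
    have hcomm : NormedSpace.exp ((T - s) • P) * P = P * NormedSpace.exp ((T - s) • P) :=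
      (((Commute.refl P).smul_right (T - s)).exp_right).eq.symm
    refine (((hasDerivAt_exp_sub_smul T P s).hasDerivWithinAt.mulVec (hX s hs)).add
      ((hasDerivAt_integral_exp_sub_smul T P s).hasDerivWithinAt.mulVec
        (hasDerivWithinAt_const s _ v))).congr_deriv ?_
    simp only [mulVec_add, mulVec_mulVec, hcomm, mulVec_zero, neg_mulVec]
    abel
  have hT : T ∈ Icc a T := ⟨ht.1.trans ht.2, le_rfl⟩
  have hgt : g t = g T := by
    have := (convex_Icc a T).norm_image_sub_le_of_norm_hasDerivWithin_le hg
      (fun _ _ => norm_zero.le) ht hT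
    simpa [sub_eq_zero, eq_comm] using this
  have hgT : g T = X T := by simp [g]
  exact hgt.trans hgT

end Matrix

theorem fbode_affine_relation_general
    (T : ℝ) (n : ℕ)
    (φ00 φ01 φ10 φ11 DT : Matrix (Fin n) (Fin n) ℝ) (F0 : Fin n → ℝ)
    (P : Matrix (Fin n ⊕ Fin n) (Fin n ⊕ Fin n) ℝ)
    (hP : P = Matrix.fromBlocks φ00 φ01 φ10 φ11)
    (Φ : ℝ → Matrix (Fin n ⊕ Fin n) (Fin n ⊕ Fin n) ℝ)
    (hΦ : ∀ t, Φ t = NormedSpace.exp ((T - t) • P))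
    (L : Matrix (Fin n) (Fin n ⊕ Fin n) ℝ)
    (hL : L = Matrix.fromCols DT (-(1 : Matrix (Fin n) (Fin n) ℝ)))
    (E₁ E₂ : Matrix (Fin n ⊕ Fin n) (Fin n) ℝ)
    (hE₁ : E₁ = Matrix.fromRows (1 : Matrix (Fin n) (Fin n) ℝ) 0)
    (hE₂ : E₂ = Matrix.fromRows 0 (1 : Matrix (Fin n) (Fin n) ℝ))
    (M : ℝ → Matrix (Fin n) (Fin n) ℝ)
    (hM : ∀ t, M t = L * Φ t * E₂)
    (hMinv : ∀ t ∈ Set.Icc (0 : ℝ) T, IsUnit (M t))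
    (D : ℝ → Matrix (Fin n) (Fin n) ℝ)
    (hD : ∀ t, D t = -((M t)⁻¹ * L * Φ t * E₁))
    (v : Fin n ⊕ Fin n → ℝ) (hv : v = Sum.elim F0 0)
    (D0 : ℝ → (Fin n → ℝ))
    (hD0 : ∀ t, D0 t = -(((M t)⁻¹ * L * ∫ s in t..T, Φ s) *ᵥ v))
    (𝔽 𝔹 : ℝ → (Fin n → ℝ))
    (h𝔽 : ∀ t ∈ Set.Icc (0 : ℝ) T,
      HasDerivWithinAt 𝔽 (φ00 *ᵥ 𝔽 t + φ01 *ᵥ 𝔹 t + F0) (Set.Icc (0 : ℝ) T) t)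
    (h𝔹 : ∀ t ∈ Set.Icc (0 : ℝ) T,
      HasDerivWithinAt 𝔹 (φ10 *ᵥ 𝔽 t + φ11 *ᵥ 𝔹 t) (Set.Icc (0 : ℝ) T) t)
    (h𝔹T : 𝔹 T = DT *ᵥ 𝔽 T) :
    ∀ t ∈ Set.Icc (0 : ℝ) T, 𝔹 t = D t *ᵥ 𝔽 t + D0 t := by
  intro t ht
  set X : ℝ → Fin n ⊕ Fin n → ℝ := fun s => Sum.elim (𝔽 s) (𝔹 s)
  have hX : ∀ s ∈ Icc 0 T, HasDerivWithinAt X (P *ᵥ X s + v) (Icc 0 T) s := fun s hs =>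
    ((h𝔽 s hs).sumElim (h𝔹 s hs)).congr_deriv <| by
      ext (i | i) <;> simp [X, hP, hv, fromBlocks_mulVec]
  have hLX : L *ᵥ X T = 0 := by simp [X, hL, h𝔹T, neg_mulVec]
  have hsplit : X t = E₁ *ᵥ 𝔽 t + E₂ *ᵥ 𝔹 t := by
    ext (i | i) <;> simp [X, hE₁, hE₂, fromRows_mulVec]
  have duhamel := exp_sub_smul_mulVec_add_integral_mulVec_eq hX ht
  simp only [← hΦ] at duhamel
  have hMB : M t *ᵥ 𝔹 t = -((L * Φ t * E₁) *ᵥ 𝔽 t + (L * ∫ s in t..T, Φ s) *ᵥ v) := by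
    rw [eq_neg_iff_add_eq_zero, hM, ← hLX, ← duhamel, hsplit]
    simp only [mulVec_add, mulVec_mulVec, Matrix.mul_assoc]
    abel
  let _ := (hMinv t ht).invertible
  rw [hD, hD0, ← inv_mulVec_eq_vec hMB.symm]
  simp only [neg_mulVec, ← mulVec_mulVec, mulVec_add, mulVec_neg, neg_add]

/-- Every solution of the linear forward–backward two-point boundary value
problem `𝔽' = φ₀₀𝔽 + φ₀₁𝔹 + F⁰`, `𝔹' = φ₁₀𝔽 + φ₁₁𝔹`, `𝔹(T) = D_T 𝔽(T)`
satisfies the affine relation `𝔹 = D𝔽 + D⁰` with `D` and `D⁰` given by the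
explicit formulas in terms of the fundamental solution `Φ(t) = exp((T−t)𝒫)`. -/
theorem fbode_affine_relation
    (T : ℝ) (hT : 0 < T) (n : ℕ)
    (φ00 φ01 φ10 φ11 DT : Matrix (Fin n) (Fin n) ℝ) (F0 : Fin n → ℝ)
    (P : Matrix (Fin n ⊕ Fin n) (Fin n ⊕ Fin n) ℝ)
    (hP : P = Matrix.fromBlocks φ00 φ01 φ10 φ11)
    (Φ : ℝ → Matrix (Fin n ⊕ Fin n) (Fin n ⊕ Fin n) ℝ)
    (hΦ : ∀ t, Φ t = NormedSpace.exp ((T - t) • P))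
    (L : Matrix (Fin n) (Fin n ⊕ Fin n) ℝ)
    (hL : L = Matrix.fromCols DT (-(1 : Matrix (Fin n) (Fin n) ℝ)))
    (E₁ E₂ : Matrix (Fin n ⊕ Fin n) (Fin n) ℝ)
    (hE₁ : E₁ = Matrix.fromRows (1 : Matrix (Fin n) (Fin n) ℝ) 0)
    (hE₂ : E₂ = Matrix.fromRows 0 (1 : Matrix (Fin n) (Fin n) ℝ))
    (M : ℝ → Matrix (Fin n) (Fin n) ℝ)
    (hM : ∀ t, M t = L * Φ t * E₂)
    (hMinv : ∀ t ∈ Set.Icc (0 : ℝ) T, IsUnit (M t))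
    (D : ℝ → Matrix (Fin n) (Fin n) ℝ)
    (hD : ∀ t, D t = -((M t)⁻¹ * L * Φ t * E₁))
    (v : Fin n ⊕ Fin n → ℝ) (hv : v = Sum.elim F0 0)
    (D0 : ℝ → (Fin n → ℝ))
    (hD0 : ∀ t, D0 t = -(((M t)⁻¹ * L * ∫ s in t..T, Φ s) *ᵥ v))
    (𝔽 𝔹 : ℝ → (Fin n → ℝ))
    (h𝔽 : ∀ t ∈ Set.Icc (0 : ℝ) T,
      HasDerivWithinAt 𝔽 (φ00 *ᵥ 𝔽 t + φ01 *ᵥ 𝔹 t + F0) (Set.Icc (0 : ℝ) T) t)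
    (h𝔹 : ∀ t ∈ Set.Icc (0 : ℝ) T,
      HasDerivWithinAt 𝔹 (φ10 *ᵥ 𝔽 t + φ11 *ᵥ 𝔹 t) (Set.Icc (0 : ℝ) T) t)
    (h𝔹T : 𝔹 T = DT *ᵥ 𝔽 T) :
    ∀ t ∈ Set.Icc (0 : ℝ) T, 𝔹 t = D t *ᵥ 𝔽 t + D0 t :=
  fbode_affine_relation_general T n φ00 φ01 φ10 φ11 DT F0 P hP Φ hΦ L hL E₁ E₂ hE₁ hE₂ M hM hMinv D
    hD v hv D0 hD0 𝔽 𝔹 h𝔽 h𝔹 h𝔹T
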